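/- arXiv:math/0610018 — 2 statements merged into one kernel-verified Lean document; each statement's English description precedes it below -/
import Mathlib

section
/- Let V be a complex inner product space, let Q : V → [0, ∞] be any function, and let F : V → ℂ² be a linear map such that ‖F(u)‖ < ‖u‖ for every u ≠ 0. For each positive integer j define a_j = inf over all j-dimensional subspaces N of V of ( sup over u ∈ N with ‖u‖ = 1 of Q(u) ), and b_j = inf over all j-dimensional subspaces N of V of ( sup over u ∈ N with ‖u‖ = 1 of Q(u)/(1 − ‖F(u)‖²) ), where the infimum over an empty family is +∞ and values are taken in [0, ∞]. Then for every j: a_j ≤ b_j ≤ a_{j+2}. -/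
open scoped ENNReal

/-- `aVal Q j` is the min–max value
`inf_{N ⊆ V, dim N = j} sup_{u ∈ N, ‖u‖ = 1} Q(u)` in `[0,∞]`,
the infimum over the empty family being `+∞`. -/
noncomputable def aVal {V : Type*} [NormedAddCommGroup V] [InnerProductSpace ℂ V]
    (Q : V → ℝ≥0∞) (j : ℕ) : ℝ≥0∞ :=
  ⨅ (N : Submodule ℂ V) (_ : Module.finrank ℂ N = j),
    ⨆ (u : V) (_ : u ∈ N) (_ : ‖u‖ = 1), Q u

/-- `bVal Q F j` is the min–max value
`inf_{N ⊆ V, dim N = j} sup_{u ∈ N, ‖u‖ = 1} Q(u)/(1 - ‖F(u)‖²)` in `[0,∞]`,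
the infimum over the empty family being `+∞`. -/
noncomputable def bVal {V : Type*} [NormedAddCommGroup V] [InnerProductSpace ℂ V]
    (Q : V → ℝ≥0∞) (F : V →ₗ[ℂ] EuclideanSpace ℂ (Fin 2)) (j : ℕ) : ℝ≥0∞ :=
  ⨅ (N : Submodule ℂ V) (_ : Module.finrank ℂ N = j),
    ⨆ (u : V) (_ : u ∈ N) (_ : ‖u‖ = 1), Q u / ENNReal.ofReal (1 - ‖F u‖ ^ 2)


open Module

lemma exists_submodule_finrank_eq_aux {K : Type*} [Field K] {W : Type*} [AddCommGroup W]
    [Module K W] [FiniteDimensional K W] (k : ℕ) (hk : k ≤ finrank K W) :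
    ∃ M : Submodule K W, finrank K M = k := by
  classical
  set b := finBasis K W
  have hli : LinearIndependent K (fun i : Fin k => b (Fin.castLE hk i)) :=
    b.linearIndependent.comp _ (Fin.castLE_injective hk)
  refine ⟨Submodule.span K (Set.range fun i : Fin k => b (Fin.castLE hk i)), ?_⟩
  rw [finrank_span_eq_card hli]
  simp


/-- Let `V` be a complex inner product space, `Q : V → [0,∞]` any
function, and `F : V → ℂ²` a linear map with `‖F(u)‖ < ‖u‖` for every `u ≠ 0`. Then for
every positive integer `j` the min–max values interlace: `a_j ≤ b_j ≤ a_{j+2}`. -/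
theorem minmax_interlacing
    {V : Type*} [NormedAddCommGroup V] [InnerProductSpace ℂ V]
    (Q : V → ℝ≥0∞) (F : V →ₗ[ℂ] EuclideanSpace ℂ (Fin 2))
    (hF : ∀ u : V, u ≠ 0 → ‖F u‖ < ‖u‖)
    (j : ℕ) (hj : 1 ≤ j) :
    aVal Q j ≤ bVal Q F j ∧ bVal Q F j ≤ aVal Q (j + 2) := by
  constructor
  · refine iInf_mono fun N => iInf_mono fun _ => iSup_mono fun u => iSup_mono fun _ =>
      iSup_mono fun _ => ?_
    have hb : ENNReal.ofReal (1 - ‖F u‖ ^ 2) ≤ 1 := by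
      rw [← ENNReal.ofReal_one]
      exact ENNReal.ofReal_le_ofReal (by nlinarith [sq_nonneg ‖F u‖])
    calc Q u = Q u / 1 := (div_one _).symm
      _ ≤ Q u / ENNReal.ofReal (1 - ‖F u‖ ^ 2) := ENNReal.div_le_div_left hb _
  · rw [bVal, aVal]
    refine le_iInf₂ fun N hN => ?_
    haveI : FiniteDimensional ℂ N := FiniteDimensional.of_finrank_pos (by omega : 0 < finrank ℂ N)
    set W : Submodule ℂ V := N ⊓ LinearMap.ker F with hW
    have hWN : W ≤ N := inf_le_left
    -- dimension count
    have hrn := LinearMap.finrank_range_add_finrank_ker (F.domRestrict N)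
    have hker : LinearMap.ker (F.domRestrict N) = Submodule.comap N.subtype W := by
      rw [LinearMap.ker_domRestrict, hW, Submodule.comap_inf]
      simp [Submodule.comap_subtype_self]
    have hkerW : finrank ℂ (LinearMap.ker (F.domRestrict N)) = finrank ℂ W := by
      rw [hker]
      exact (Submodule.comapSubtypeEquivOfLe hWN).finrank_eq
    have hrange : finrank ℂ (LinearMap.range (F.domRestrict N)) ≤ 2 := by
      have := Submodule.finrank_le (LinearMap.range (F.domRestrict N))
      simpa [finrank_euclideanSpace_fin] using this
    haveI : FiniteDimensional ℂ W := Submodule.finiteDimensional_of_le hWN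
    have hdim : j ≤ finrank ℂ W := by omega
    obtain ⟨M', hM'⟩ := exists_submodule_finrank_eq_aux (K := ℂ) (W := W) j hdim
    set M : Submodule ℂ V := M'.map W.subtype with hM
    have hMfr : finrank ℂ M = j := by
      rw [hM, (Submodule.equivMapOfInjective W.subtype (Submodule.injective_subtype W) M').finrank_eq.symm]
      exact hM'
    refine iInf₂_le_of_le M hMfr ?_
    refine iSup₂_le fun u hu => iSup_le fun hnorm => ?_
    have huW : u ∈ W := by
      rw [hM] at hu
      obtain ⟨x, -, rfl⟩ := hu
      exact x.2
    have hFu : F u = 0 := huW.2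
    have h1 : ENNReal.ofReal (1 - ‖F u‖ ^ 2) = 1 := by
      rw [hFu]
      simp
    rw [h1, div_one]
    exact le_iSup₂_of_le u (hWN huW) (le_iSup_of_le hnorm le_rfl)
end

section
/- Let H be a complex Hilbert space, ω₀ ∈ ℂ, and let S be a function from a neighborhood W of ω₀ to the bounded linear operators on H that is holomorphic on W. Suppose there exist a bounded operator T on H and a holomorphic function Q : W → L(H) such that for every ω ∈ W ∖ {ω₀} the operator S(ω) has a bounded inverse with S(ω)⁻¹ = (ω − ω₀)⁻¹ T + Q(ω). Then: (i) S(ω₀) ∘ T = 0 and T ∘ S(ω₀) = 0, so range(T) ⊆ ker S(ω₀) and range S(ω₀) ⊆ ker T; and (ii) if moreover ker S(ω₀) is the one-dimensional span of a nonzero vector φ and range S(ω₀) equals the orthogonal complement {φ}^⊥, then there exists a constant C ∈ ℂ such that T(f) = C ⟨f, φ⟩ φ for all f ∈ H. -/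
open Filter Topology

/-!
Multiplying `S ω * ((ω - ω₀)⁻¹ T + Q ω) = 1` by `ω - ω₀` gives
`S ω * (T + (ω - ω₀) Q ω) = (ω - ω₀) • 1`; letting `ω → ω₀` yields `S ω₀ T = 0`, and likewise
`T S ω₀ = 0`. Hence `T` maps into `ker S(ω₀) = span {φ}` and kills `range S(ω₀) = {φ}ᗮ`, so it
factors through the orthogonal projection onto `span {φ}`, which is `f ↦ ⟨φ, f⟩ φ / ‖φ‖²`.
-/

section Pole
variable {𝕜 A : Type*} [NontriviallyNormedField 𝕜] {z₀ : 𝕜}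

theorem ContinuousAt.eq_zero_of_eventuallyEq_sub_smul {E : Type*} [NormedAddCommGroup E]
    [NormedSpace 𝕜 E] {F : 𝕜 → E} {a : E} (hF : ContinuousAt F z₀)
    (h : ∀ᶠ z in 𝓝[≠] z₀, F z = (z - z₀) • a) : F z₀ = 0 := by
  have hlim : Tendsto (fun z => (z - z₀) • a) (𝓝[≠] z₀) (𝓝 0) :=
    (((continuous_sub_right z₀).smul continuous_const).tendsto' z₀ 0 (by simp)).mono_left
      nhdsWithin_le_nhds
  exact tendsto_nhds_unique_of_eventuallyEq (hF.tendsto.mono_left nhdsWithin_le_nhds) hlim h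

variable [NormedRing A] [NormedAlgebra 𝕜 A] {S Q : 𝕜 → A} {T : A}

theorem sub_smul_inv_smul_add (Q : 𝕜 → A) (T : A) {z : 𝕜} (hz : z ≠ z₀) :
    (z - z₀) • ((z - z₀)⁻¹ • T + Q z) = T + (z - z₀) • Q z := by
  rw [smul_add, smul_smul, mul_inv_cancel₀ (sub_ne_zero.mpr hz), one_smul]

theorem continuousAt_const_add_sub_smul (T : A) (hQ : ContinuousAt Q z₀) :
    ContinuousAt (fun z => T + (z - z₀) • Q z) z₀ :=
  continuousAt_const.add ((continuousAt_id.sub continuousAt_const).smul hQ)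

theorem mul_residue_eq_zero_of_mul_eq_one (hS : ContinuousAt S z₀) (hQ : ContinuousAt Q z₀)
    (h : ∀ᶠ z in 𝓝[≠] z₀, S z * ((z - z₀)⁻¹ • T + Q z) = 1) : S z₀ * T = 0 := by
  have := (hS.mul (continuousAt_const_add_sub_smul T hQ)).eq_zero_of_eventuallyEq_sub_smul
    (a := (1 : A)) <| by
      filter_upwards [h, self_mem_nhdsWithin] with z hz hne
      rw [Pi.mul_apply, ← sub_smul_inv_smul_add Q T hne, mul_smul_comm, hz]
  simpa using this

theorem residue_mul_eq_zero_of_mul_eq_one (hS : ContinuousAt S z₀) (hQ : ContinuousAt Q z₀)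
    (h : ∀ᶠ z in 𝓝[≠] z₀, ((z - z₀)⁻¹ • T + Q z) * S z = 1) : T * S z₀ = 0 := by
  have := ((continuousAt_const_add_sub_smul T hQ).mul hS).eq_zero_of_eventuallyEq_sub_smul
    (a := (1 : A)) <| by
      filter_upwards [h, self_mem_nhdsWithin] with z hz hne
      rw [Pi.mul_apply, ← sub_smul_inv_smul_add Q T hne, smul_mul_assoc, hz]
  simpa using this

end Pole

theorem exists_eq_smul_inner_smul {𝕜 E : Type*} [RCLike 𝕜] [NormedAddCommGroup E]
    [InnerProductSpace 𝕜 E] (T : E →ₗ[𝕜] E) (φ : E)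
    (hrange : LinearMap.range T ≤ 𝕜 ∙ φ) (hker : (𝕜 ∙ φ)ᗮ ≤ LinearMap.ker T) :
    ∃ C : 𝕜, ∀ f, T f = C • inner 𝕜 φ f • φ := by
  obtain ⟨c, hc⟩ := Submodule.mem_span_singleton.mp (hrange ⟨φ, rfl⟩)
  refine ⟨c / ((‖φ‖ ^ 2 : ℝ) : 𝕜), fun f => ?_⟩
  have hperp : T (f - (𝕜 ∙ φ).starProjection f) = 0 :=
    hker (Submodule.sub_starProjection_mem_orthogonal f)
  rw [map_sub, sub_eq_zero, Submodule.starProjection_singleton, map_smul, ← hc] at hperp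
  rw [hperp, smul_smul, smul_smul, div_mul_eq_mul_div, div_mul_eq_mul_div, mul_comm]

theorem simple_pole_residue_rank_one_general
    {H : Type*} [NormedAddCommGroup H] [InnerProductSpace ℂ H]
    (ω₀ : ℂ) (W : Set ℂ) (hW : W ∈ 𝓝 ω₀)
    (S : ℂ → H →L[ℂ] H) (hS : ∀ ω ∈ W, AnalyticAt ℂ S ω)
    (T : H →L[ℂ] H) (Q : ℂ → H →L[ℂ] H) (hQ : ∀ ω ∈ W, AnalyticAt ℂ Q ω)
    (hinv : ∀ ω ∈ W, ω ≠ ω₀ →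
      S ω * ((ω - ω₀)⁻¹ • T + Q ω) = 1 ∧ ((ω - ω₀)⁻¹ • T + Q ω) * S ω = 1) :
    (S ω₀ ∘L T = 0 ∧ T ∘L S ω₀ = 0 ∧
      LinearMap.range (T : H →ₗ[ℂ] H) ≤ LinearMap.ker (S ω₀ : H →ₗ[ℂ] H) ∧
      LinearMap.range (S ω₀ : H →ₗ[ℂ] H) ≤ LinearMap.ker (T : H →ₗ[ℂ] H)) ∧
    (∀ φ : H, φ ≠ 0 →
      LinearMap.ker (S ω₀ : H →ₗ[ℂ] H) = Submodule.span ℂ {φ} →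
      LinearMap.range (S ω₀ : H →ₗ[ℂ] H) = (Submodule.span ℂ {φ} : Submodule ℂ H)ᗮ →
      ∃ C : ℂ, ∀ f : H, T f = C • (inner ℂ φ f : ℂ) • φ) := by
  have hω₀ : ω₀ ∈ W := mem_of_mem_nhds hW
  have hpunct : ∀ᶠ ω in 𝓝[≠] ω₀, ω ∈ W ∧ ω ≠ ω₀ :=
    Eventually.and (nhdsWithin_le_nhds hW) self_mem_nhdsWithin
  have hST : S ω₀ ∘L T = 0 := mul_residue_eq_zero_of_mul_eq_one (hS ω₀ hω₀).continuousAt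
    (hQ ω₀ hω₀).continuousAt (hpunct.mono fun ω h => (hinv ω h.1 h.2).1)
  have hTS : T ∘L S ω₀ = 0 := residue_mul_eq_zero_of_mul_eq_one (hS ω₀ hω₀).continuousAt
    (hQ ω₀ hω₀).continuousAt (hpunct.mono fun ω h => (hinv ω h.1 h.2).2)
  have hrangeT : LinearMap.range (T : H →ₗ[ℂ] H) ≤ LinearMap.ker (S ω₀ : H →ₗ[ℂ] H) :=
    LinearMap.range_le_ker_iff.mpr (by simpa using congrArg ContinuousLinearMap.toLinearMap hST)
  have hrangeS : LinearMap.range (S ω₀ : H →ₗ[ℂ] H) ≤ LinearMap.ker (T : H →ₗ[ℂ] H) :=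
    LinearMap.range_le_ker_iff.mpr (by simpa using congrArg ContinuousLinearMap.toLinearMap hTS)
  refine ⟨⟨hST, hTS, hrangeT, hrangeS⟩, fun φ _ hker hrange => ?_⟩
  exact exists_eq_smul_inner_smul (T : H →ₗ[ℂ] H) φ (hker ▸ hrangeT) (hrange ▸ hrangeS)

/-- Let `H` be a complex Hilbert space, `ω₀ ∈ ℂ`, and `S` a function from
a neighborhood `W` of `ω₀` to the bounded operators on `H`, holomorphic on `W`. Suppose
there are a bounded operator `T` and a holomorphic `Q : W → L(H)` such that for every
`ω ∈ W ∖ {ω₀}` the operator `S ω` has the bounded two-sided inverse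
`S(ω)⁻¹ = (ω - ω₀)⁻¹ T + Q(ω)`. Then:
(i) `S(ω₀) ∘ T = 0` and `T ∘ S(ω₀) = 0`, so `range T ⊆ ker S(ω₀)` and
`range S(ω₀) ⊆ ker T`; and
(ii) if moreover `ker S(ω₀)` is the span of a nonzero vector `φ` and `range S(ω₀)` is the
orthogonal complement `{φ}^⊥`, then there is `C ∈ ℂ` with `T f = C⟨f,φ⟩φ` for all `f`
(the pairing `⟨f,φ⟩` being linear in `f`, i.e. `inner φ f` in Mathlib's convention). -/
theorem simple_pole_residue_rank_one
    {H : Type*} [NormedAddCommGroup H] [InnerProductSpace ℂ H] [CompleteSpace H]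
    (ω₀ : ℂ) (W : Set ℂ) (hW : W ∈ 𝓝 ω₀)
    (S : ℂ → H →L[ℂ] H) (hS : ∀ ω ∈ W, AnalyticAt ℂ S ω)
    (T : H →L[ℂ] H) (Q : ℂ → H →L[ℂ] H) (hQ : ∀ ω ∈ W, AnalyticAt ℂ Q ω)
    (hinv : ∀ ω ∈ W, ω ≠ ω₀ →
      S ω * ((ω - ω₀)⁻¹ • T + Q ω) = 1 ∧ ((ω - ω₀)⁻¹ • T + Q ω) * S ω = 1) :
    (S ω₀ ∘L T = 0 ∧ T ∘L S ω₀ = 0 ∧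
      LinearMap.range (T : H →ₗ[ℂ] H) ≤ LinearMap.ker (S ω₀ : H →ₗ[ℂ] H) ∧
      LinearMap.range (S ω₀ : H →ₗ[ℂ] H) ≤ LinearMap.ker (T : H →ₗ[ℂ] H)) ∧
    (∀ φ : H, φ ≠ 0 →
      LinearMap.ker (S ω₀ : H →ₗ[ℂ] H) = Submodule.span ℂ {φ} →
      LinearMap.range (S ω₀ : H →ₗ[ℂ] H) = (Submodule.span ℂ {φ} : Submodule ℂ H)ᗮ →
      ∃ C : ℂ, ∀ f : H, T f = C • (inner ℂ φ f : ℂ) • φ) :=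
  simple_pole_residue_rank_one_general ω₀ W hW S hS T Q hQ hinv
end
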